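/- arXiv:1702.02239 — 2 statements merged into one kernel-verified Lean document; each statement's English description precedes it below -/
import Mathlib

section
/- Let n_j : ℝ → E (j=1,…,N) be differentiable maps with derivatives ṅ_j such that {n_j(t)} is an orthonormal basis of E for every t, and let θ_j : ℝ → ℝ. Then for every t, the trace of the square of the shortcut Hamiltonian satisfies Tr[H_SA(t)²] = Σ_j ( ‖ṅ_j(t)‖² + θ_j(t)² + 2 i θ_j(t) ⟪ṅ_j(t), n_j(t)⟫ ) (an identity in ℂ; both sides are in fact real). -/
/-! `H_SA(t)` sends `n_k` to `i (ṅ_k + i θ_k n_k)`. Differentiating `⟪n_j, n_k⟫ = δ_jk` gives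
`⟪n_j, ṅ_k⟫ = -⟪ṅ_j, n_k⟫`, which makes `H_SA(t)` Hermitian, so
`Tr H² = Σ_k ‖H n_k‖² = Σ_k ‖ṅ_k + i θ_k n_k‖²`; expanding this norm with the same relation
for `j = k` gives the stated sum. -/

/-- The rank-one operator `|u⟩⟨v| : z ↦ ⟪v, z⟫ • u`. -/
noncomputable def ketBra {E : Type*} [NormedAddCommGroup E] [InnerProductSpace ℂ E]
    (u v : E) : E →L[ℂ] E :=
  (innerSL ℂ v).smulRight u

/-- The shortcut (transitionless) Hamiltonian
`H_SA(t) = i Σ_j ( |ṅ_j(t)⟩⟨n_j(t)| + i θ_j(t) |n_j(t)⟩⟨n_j(t)| )`. -/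
noncomputable def HSA {E : Type*} [NormedAddCommGroup E] [InnerProductSpace ℂ E]
    {N : ℕ} (n n' : Fin N → ℝ → E) (θ : Fin N → ℝ → ℝ) (t : ℝ) : E →L[ℂ] E :=
  Complex.I • ∑ j : Fin N,
    (ketBra (n' j t) (n j t) + (Complex.I * (θ j t : ℂ)) • ketBra (n j t) (n j t))

open scoped InnerProductSpace

section RCLike

variable {𝕜 E ι : Type*} [RCLike 𝕜] [NormedAddCommGroup E] [InnerProductSpace 𝕜 E]

theorem LinearMap.isSymmetric_of_basis [FiniteDimensional 𝕜 E] (b : Module.Basis ι 𝕜 E)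
    {T : E →ₗ[𝕜] E} (h : ∀ i j, ⟪T (b i), b j⟫_𝕜 = ⟪b i, T (b j)⟫_𝕜) : T.IsSymmetric := by
  rw [LinearMap.isSymmetric_iff_isSelfAdjoint, LinearMap.isSelfAdjoint_iff', eq_comm]
  exact (LinearMap.eq_adjoint_iff_basis b b T T).mpr h

theorem LinearMap.IsSymmetric.trace_comp_self [Fintype ι] (b : OrthonormalBasis ι 𝕜 E)
    {T : E →ₗ[𝕜] E} (hT : T.IsSymmetric) :
    LinearMap.trace 𝕜 E (T ∘ₗ T) = ∑ i, ⟪T (b i), T (b i)⟫_𝕜 := by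
  rw [LinearMap.trace_eq_sum_inner _ b]
  exact Finset.sum_congr rfl fun i _ => (hT (b i) (T (b i))).symm

theorem inner_deriv_right_eq_neg_of_inner_const [NormedSpace ℝ E] {u v : ℝ → E} {u' v' : E}
    {t : ℝ} {c : 𝕜} (hu : HasDerivAt u u' t) (hv : HasDerivAt v v' t)
    (hc : ∀ s, ⟪u s, v s⟫_𝕜 = c) : ⟪u t, v'⟫_𝕜 = -⟪u', v t⟫_𝕜 := by
  have hconst : HasDerivAt (fun s => ⟪u s, v s⟫_𝕜) 0 t := by
    simpa only [hc] using hasDerivAt_const t c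
  exact eq_neg_of_add_eq_zero_left ((hu.inner 𝕜 hv).unique hconst)

end RCLike

section Shortcut

open Complex

variable {E : Type*} [NormedAddCommGroup E] [InnerProductSpace ℂ E]

theorem inner_I_smul_self (w : E) : ⟪I • w, I • w⟫_ℂ = ⟪w, w⟫_ℂ := by
  rw [inner_smul_left, inner_smul_right, ← mul_assoc, conj_I, neg_mul, I_mul_I, neg_neg, one_mul]

theorem inner_self_add_I_mul_smul {u x : E} (θ : ℝ) (hx : ‖x‖ = 1)
    (hux : ⟪x, u⟫_ℂ = -⟪u, x⟫_ℂ) :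
    ⟪u + (I * θ) • x, u + (I * θ) • x⟫_ℂ =
      ((‖u‖ ^ 2 : ℝ) : ℂ) + (θ : ℂ) ^ 2 + 2 * I * θ * ⟪u, x⟫_ℂ := by
  simp only [inner_add_left, inner_add_right, inner_smul_left, inner_smul_right, hux,
    inner_self_eq_norm_sq_to_K u, inner_self_eq_norm_sq_to_K x, hx, map_mul, conj_I, conj_ofReal]
  push_cast
  linear_combination -(θ : ℂ) ^ 2 * I_sq

theorem ketBra_apply (u v z : E) : ketBra u v z = ⟪v, z⟫_ℂ • u := rfl

variable {N : ℕ} (n n' : Fin N → ℝ → E) (θ : Fin N → ℝ → ℝ) {t : ℝ}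

theorem HSA_apply_of_orthonormal (hON : Orthonormal ℂ fun j => n j t) (k : Fin N) :
    HSA n n' θ t (n k t) = I • (n' k t + (I * θ k t) • n k t) := by
  simp [HSA, ketBra_apply, orthonormal_iff_ite.mp hON, Finset.sum_add_distrib]

theorem isSymmetric_HSA [FiniteDimensional ℂ E] (hON : Orthonormal ℂ fun j => n j t)
    (hspan : Submodule.span ℂ (Set.range fun j => n j t) = ⊤)
    (hanti : ∀ j k, ⟪n j t, n' k t⟫_ℂ = -⟪n' j t, n k t⟫_ℂ) :
    (HSA n n' θ t : E →ₗ[ℂ] E).IsSymmetric := by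
  let b : OrthonormalBasis (Fin N) ℂ E := OrthonormalBasis.mk hON hspan.ge
  refine LinearMap.isSymmetric_of_basis b.toBasis fun j k => ?_
  simp only [b, OrthonormalBasis.coe_toBasis, OrthonormalBasis.coe_mk,
    ContinuousLinearMap.coe_coe, HSA_apply_of_orthonormal n n' θ hON, inner_smul_left,
    inner_smul_right, inner_add_left, inner_add_right, orthonormal_iff_ite.mp hON, hanti]
  rcases eq_or_ne j k with rfl | hjk
  · simp only [if_true, mul_one, map_mul, conj_I, conj_ofReal]
    ring
  · simp [hjk]

end Shortcut

/-- The trace of the square of the shortcut Hamiltonian satisfies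
`Tr[H_SA(t)²] = Σ_j ( ‖ṅ_j(t)‖² + θ_j(t)² + 2 i θ_j(t) ⟪ṅ_j(t), n_j(t)⟫ )`. -/
theorem trace_sq_shortcut_hamiltonian
    {E : Type*} [NormedAddCommGroup E] [InnerProductSpace ℂ E] [FiniteDimensional ℂ E]
    {N : ℕ} (n n' : Fin N → ℝ → E) (θ : Fin N → ℝ → ℝ)
    (hON : ∀ t : ℝ, Orthonormal ℂ (fun j : Fin N => n j t))
    (hspan : ∀ t : ℝ, Submodule.span ℂ (Set.range (fun j : Fin N => n j t)) = ⊤)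
    (hn : ∀ (j : Fin N) (t : ℝ), HasDerivAt (n j) (n' j t) t) :
    ∀ t : ℝ,
      LinearMap.trace ℂ E (((HSA n n' θ t).comp (HSA n n' θ t) : E →L[ℂ] E) : E →ₗ[ℂ] E) =
        ∑ j : Fin N, (((‖n' j t‖ ^ 2 : ℝ) : ℂ) + ((θ j t : ℂ)) ^ 2
          + 2 * Complex.I * (θ j t : ℂ) * (inner ℂ (n' j t) (n j t) : ℂ)) := by
  intro t
  have hanti : ∀ j k, ⟪n j t, n' k t⟫_ℂ = -⟪n' j t, n k t⟫_ℂ := fun j k =>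
    inner_deriv_right_eq_neg_of_inner_const (hn j t) (hn k t)
      fun s => orthonormal_iff_ite.mp (hON s) j k
  let b : OrthonormalBasis (Fin N) ℂ E := OrthonormalBasis.mk (hON t) (hspan t).ge
  rw [ContinuousLinearMap.toLinearMap_comp,
    (isSymmetric_HSA n n' θ (hON t) (hspan t) hanti).trace_comp_self b]
  refine Finset.sum_congr rfl fun k _ => ?_
  rw [ContinuousLinearMap.coe_coe, OrthonormalBasis.coe_mk,
    HSA_apply_of_orthonormal n n' θ (hON t), inner_I_smul_self,
    inner_self_add_I_mul_smul _ ((hON t).1 k) (hanti k k)]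
end

section
/- (Theorem 2.) Let n_j : ℝ → E (j=1,…,N) be differentiable maps with derivatives ṅ_j such that {n_j(t)} is an orthonormal basis of E for every t. Suppose there exist complex constants c_{km} with ⟪n_k(t), ṅ_m(t)⟫ = c_{km} for all k, m and all t, and let θ ∈ ℝ be a single real constant with θ_j(t) = θ for all j and t. Then the shortcut Hamiltonian is time-independent: H_SA(t) = H_SA(0) for all t ∈ ℝ. -/
/-!
Differentiating `⟪n_k, n_m⟫ = δ_km` shows that the matrix `C = (c_km)` is skew-Hermitian, and
expanding in the moving frame gives `ṅ_m = ∑_k c_km n_k`, hence `n̈_m = ∑_k c_km ṅ_k`. The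
derivative `∑_j |n̈_j⟩⟨n_j| + |ṅ_j⟩⟨ṅ_j|` of `∑_j |ṅ_j⟩⟨n_j|` therefore vanishes, while
`∑_j |n_j⟩⟨n_j| = 1`; so with a constant phase `H_SA` is constant.
-/

open InnerProductSpace

section RankOne

variable {E : Type*} [NormedAddCommGroup E] [InnerProductSpace ℂ E]

theorem ketBra_eq_rankOne (u v : E) : ketBra u v = rankOne ℂ u v := rfl

theorem hasDerivAt_rankOne_apply {f g : ℝ → E} {f' g' : E} {t : ℝ}
    (hf : HasDerivAt f f' t) (hg : HasDerivAt g g' t) (z : E) :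
    HasDerivAt (fun s => rankOne ℂ (f s) (g s) z)
      (rankOne ℂ f' (g t) z + rankOne ℂ (f t) g' z) t := by
  have hinner : HasDerivAt (fun s => inner ℂ (g s) z) (inner ℂ g' z) t := by
    simpa using hg.inner ℂ (hasDerivAt_const t z)
  simpa only [rankOne_apply, add_comm] using hinner.fun_smul hf

/-- With `U = (u_k)` and `V = (v_k)` as columns: `U C Vᴴ + U (V C)ᴴ = U (C + Cᴴ) Vᴴ = 0`. -/
theorem sum_rankOne_add_rankOne_eq_zero {ι : Type*} [Fintype ι] {c : ι → ι → ℂ}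
    (hc : ∀ j k, starRingEnd ℂ (c j k) = -c k j) (u v : ι → E) :
    ∑ j, (rankOne ℂ (∑ k, c k j • u k) (v j) + rankOne ℂ (u j) (∑ k, c k j • v k)) = 0 := by
  simp only [map_sum, map_smul, map_smulₛₗ, FunLike.coe_sum, Finset.sum_apply,
    hc, neg_smul, Finset.sum_add_distrib, Finset.sum_neg_distrib]
  rw [Finset.sum_comm]
  exact add_neg_cancel _

end RankOne

section MovingFrame

variable {E : Type*} [NormedAddCommGroup E] [InnerProductSpace ℂ E] {ι : Type*}

theorem inner_add_inner_eq_zero_of_hasDerivAt {f g : ℝ → E} {f' g' : E} {t : ℝ} {a : ℂ}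
    (hf : HasDerivAt f f' t) (hg : HasDerivAt g g' t) (hfg : ∀ s, inner ℂ (f s) (g s) = a) :
    inner ℂ (f t) g' + inner ℂ f' (g t) = 0 :=
  (hf.inner ℂ hg).unique (by simpa only [hfg] using hasDerivAt_const t a)

theorem conj_eq_neg_of_orthonormal {n n' : ι → ℝ → E} {c : ι → ι → ℂ}
    (hON : ∀ t, Orthonormal ℂ (fun j => n j t)) (hn : ∀ j t, HasDerivAt (n j) (n' j t) t)
    (hc : ∀ k m t, inner ℂ (n k t) (n' m t) = c k m) (j k : ι) :
    starRingEnd ℂ (c j k) = -c k j := by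
  classical
  have h := inner_add_inner_eq_zero_of_hasDerivAt (hn k 0) (hn j 0)
    (fun s => orthonormal_iff_ite.mp (hON s) k j)
  rw [hc, ← inner_conj_symm, hc] at h
  exact eq_neg_of_add_eq_zero_right h

variable [Fintype ι]

theorem eq_sum_smul_of_inner_eq {n n' : ι → ℝ → E} {c : ι → ι → ℂ}
    (hON : ∀ t, Orthonormal ℂ (fun j => n j t))
    (hspan : ∀ t, Submodule.span ℂ (Set.range (fun j => n j t)) = ⊤)
    (hc : ∀ k m t, inner ℂ (n k t) (n' m t) = c k m) (m : ι) (t : ℝ) :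
    n' m t = ∑ k, c k m • n k t := by
  simpa [hc] using ((OrthonormalBasis.mk (hON t) (hspan t).ge).sum_repr' (n' m t)).symm

theorem sum_rankOne_deriv_eq_of_inner_eq {n n' : ι → ℝ → E} {c : ι → ι → ℂ}
    (hON : ∀ t, Orthonormal ℂ (fun j => n j t))
    (hspan : ∀ t, Submodule.span ℂ (Set.range (fun j => n j t)) = ⊤)
    (hn : ∀ j t, HasDerivAt (n j) (n' j t) t)
    (hc : ∀ k m t, inner ℂ (n k t) (n' m t) = c k m) (t s : ℝ) :
    ∑ j, rankOne ℂ (n' j t) (n j t) = ∑ j, rankOne ℂ (n' j s) (n j s) := by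
  have hexp := eq_sum_smul_of_inner_eq hON hspan hc
  have hn' : ∀ j t, HasDerivAt (n' j) (∑ k, c k j • n' k t) t := fun j t => by
    rw [show n' j = fun s => ∑ k, c k j • n k s from funext (hexp j)]
    exact HasDerivAt.fun_sum fun k _ => (hn k t).const_smul (c k j)
  have hderiv : ∀ z t, HasDerivAt (fun s => (∑ j, rankOne ℂ (n' j s) (n j s)) z) 0 t := by
    intro z t
    have h := HasDerivAt.fun_sum fun j (_ : j ∈ Finset.univ) =>
      hasDerivAt_rankOne_apply (hn' j t) (hn j t) z
    have hzero := congrArg (· z) (sum_rankOne_add_rankOne_eq_zero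
      (conj_eq_neg_of_orthonormal hON hn hc) (n' · t) (n · t))
    simp only [← hexp, _root_.sum_apply, _root_.add_apply, _root_.zero_apply] at hzero
    simpa only [_root_.sum_apply, hzero] using h
  ext z
  exact is_const_of_deriv_eq_zero (fun s => (hderiv z s).differentiableAt)
    (fun s => (hderiv z s).deriv) t s

end MovingFrame

theorem shortcut_hamiltonian_time_independent_general
    {E : Type*} [NormedAddCommGroup E] [InnerProductSpace ℂ E]
    {N : ℕ} (n n' : Fin N → ℝ → E) (θfun : Fin N → ℝ → ℝ)
    (hON : ∀ t : ℝ, Orthonormal ℂ (fun j : Fin N => n j t))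
    (hspan : ∀ t : ℝ, Submodule.span ℂ (Set.range (fun j : Fin N => n j t)) = ⊤)
    (hn : ∀ (j : Fin N) (t : ℝ), HasDerivAt (n j) (n' j t) t)
    (c : Fin N → Fin N → ℂ)
    (hc : ∀ (k m : Fin N) (t : ℝ), (inner ℂ (n k t) (n' m t) : ℂ) = c k m)
    (θ : ℝ) (hθ : ∀ (j : Fin N) (t : ℝ), θfun j t = θ) :
    ∀ t : ℝ, HSA n n' θfun t = HSA n n' θfun 0 := by
  have hid : ∀ t, ∑ j, rankOne ℂ (n j t) (n j t) = .id ℂ E := fun t => by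
    simpa using (OrthonormalBasis.mk (hON t) (hspan t).ge).sum_rankOne_eq_id
  intro t
  simp only [HSA, hθ, ketBra_eq_rankOne, Finset.sum_add_distrib, ← Finset.smul_sum, hid]
  rw [sum_rankOne_deriv_eq_of_inner_eq hON hspan hn hc t 0]

/-- Theorem 2: if all the matrix elements `⟪n_k(t), ṅ_m(t)⟫` are complex constants `c_{km}`
and all the phase functions are set to a single real constant `θ`, then the shortcut
Hamiltonian is time-independent: `H_SA(t) = H_SA(0)` for all `t`. -/
theorem shortcut_hamiltonian_time_independent
    {E : Type*} [NormedAddCommGroup E] [InnerProductSpace ℂ E] [FiniteDimensional ℂ E]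
    {N : ℕ} (n n' : Fin N → ℝ → E) (θfun : Fin N → ℝ → ℝ)
    (hON : ∀ t : ℝ, Orthonormal ℂ (fun j : Fin N => n j t))
    (hspan : ∀ t : ℝ, Submodule.span ℂ (Set.range (fun j : Fin N => n j t)) = ⊤)
    (hn : ∀ (j : Fin N) (t : ℝ), HasDerivAt (n j) (n' j t) t)
    (c : Fin N → Fin N → ℂ)
    (hc : ∀ (k m : Fin N) (t : ℝ), (inner ℂ (n k t) (n' m t) : ℂ) = c k m)
    (θ : ℝ) (hθ : ∀ (j : Fin N) (t : ℝ), θfun j t = θ) :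
    ∀ t : ℝ, HSA n n' θfun t = HSA n n' θfun 0 :=
  shortcut_hamiltonian_time_independent_general n n' θfun hON hspan hn c hc θ hθ
end
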